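/- Let F_1, …, F_n be pairwise disjoint matchings of size n in a graph, and let R be a rainbow matching of maximum size. Suppose e ∈ R is half-G-wasteful for at least 3 distinct unrepresented matchings G. Then all edges g that belong to some unrepresented matching G for which e is half-G-wasteful and that intersect e and no other edge of R pass through a single common vertex of e. -/

import Mathlib

/-- Two graph edges intersect (share a vertex). -/
def Meets {V : Type*} (e f : Sym2 V) : Prop := ∃ v, v ∈ e ∧ v ∈ f

/-- `g` intersects `e` and no other edge of the matching `R`. -/
def MeetsOnly {V : Type*} (R : Finset (Sym2 V)) (g e : Sym2 V) : Prop :=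
  Meets g e ∧ ∀ f ∈ R, f ≠ e → ¬ Meets g f

/-- The pair `{e, f}` of edges of `R` is half-`A`-wasteful: there are edges
`g_e, g_f, g_{ef} ∈ A` such that `g_e` intersects `e` and no other edge of `R`, `g_f`
intersects `f` and no other edge of `R`, and `g_{ef}` intersects both `e` and `f`. -/
def HalfWastefulPair {V : Type*} (R A : Finset (Sym2 V)) (e f : Sym2 V) : Prop :=
  ∃ ge ∈ A, ∃ gf ∈ A, ∃ gef ∈ A,
    MeetsOnly R ge e ∧ MeetsOnly R gf f ∧ Meets gef e ∧ Meets gef f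

/-- The edge `e ∈ R` is half-`A`-wasteful: some pair `{e, f}` with `f ∈ R` is
half-`A`-wasteful. -/
def HalfWasteful {V : Type*} (R A : Finset (Sym2 V)) (e : Sym2 V) : Prop :=
  ∃ f ∈ R, f ≠ e ∧ HalfWastefulPair R A e f

/-- The number of unrepresented matchings `F i` (i.e. `i ∉ I`) for which `e` is
half-`F i`-wasteful. -/
noncomputable def hwDeg {V : Type*} {n : ℕ} (F : Fin n → Finset (Sym2 V))
    (I : Finset (Fin n)) (R : Finset (Sym2 V)) (e : Sym2 V) : ℕ :=
  {i : Fin n | i ∉ I ∧ HalfWasteful R (F i) e}.ncard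

/-! Write `e = s(x, y)` and call an edge *private* if it meets `e` and no other edge of `R`.
Private edges of distinct unrepresented matchings meet, by maximality of `R`. If no vertex of `e`
lies on all the private edges in question, there are private edges `s(y, a)` and `s(x, b)`, and a
private edge of any third matching meets both, so it is `s(x, a)` or `s(y, b)`. With at least three
matchings, which are pairwise disjoint, both `a = b` and `a ≠ b` then give a contradiction. -/

section

variable {ι V : Type*}

theorem meets_comm {e f : Sym2 V} : Meets e f ↔ Meets f e := by
  simp only [Meets, and_comm]

theorem meets_self (e : Sym2 V) : Meets e e :=
  ⟨e.out.1, Sym2.out_fst_mem e, Sym2.out_fst_mem e⟩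

theorem not_meets_iff {e f : Sym2 V} : ¬ Meets e f ↔ ∀ v, v ∈ e → v ∉ f := by
  simp [Meets]

theorem meets_mk_mk_iff {a b c d : V} :
    Meets s(a, b) s(c, d) ↔ a = c ∨ a = d ∨ b = c ∨ b = d := by
  simp only [Meets, Sym2.mem_iff]
  aesop

theorem exists_eq_mk_of_meets {g : Sym2 V} {x y : V} (hg : ¬ g.IsDiag) (hne : g ≠ s(x, y))
    (hm : Meets g s(x, y)) : ∃ c, c ≠ x ∧ c ≠ y ∧ (g = s(x, c) ∨ g = s(y, c)) := by
  obtain ⟨u, w⟩ := g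
  rw [Sym2.mk_isDiag_iff] at hg
  rw [meets_mk_mk_iff] at hm
  rcases hm with rfl | rfl | rfl | rfl
  · exact ⟨w, fun h => hg h.symm, fun h => hne (by rw [h]), Or.inl rfl⟩
  · exact ⟨w, fun h => hne (by rw [h, Sym2.eq_swap]), fun h => hg h.symm, Or.inr rfl⟩
  · exact ⟨u, hg, fun h => hne (by rw [h, Sym2.eq_swap]), Or.inl Sym2.eq_swap⟩
  · exact ⟨u, fun h => hne (by rw [h]), hg, Or.inr Sym2.eq_swap⟩

theorem eq_or_eq_of_meets_of_meets {g : Sym2 V} {x y a b : V} (hxy : x ≠ y) (hax : a ≠ x)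
    (hby : b ≠ y) (hg : ∃ c, c ≠ x ∧ c ≠ y ∧ (g = s(x, c) ∨ g = s(y, c)))
    (h₁ : Meets g s(y, a)) (h₂ : Meets g s(x, b)) : g = s(x, a) ∨ g = s(y, b) := by
  obtain ⟨c, hcx, hcy, rfl | rfl⟩ := hg
  · rw [meets_mk_mk_iff] at h₁
    grind
  · rw [meets_mk_mk_iff] at h₂
    grind

theorem exists_mem_ne_ne_of_two_lt_ncard {S : Set ι} (hS : 2 < S.ncard) (a b : ι) :
    ∃ k ∈ S, k ≠ a ∧ k ≠ b := by
  have : 1 < (S \ {a}).ncard := by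
    have := Set.pred_ncard_le_ncard_sdiff_singleton S a
    omega
  obtain ⟨k, ⟨hkS, hka⟩, hkb⟩ := Set.exists_ne_of_one_lt_ncard this b
  exact ⟨k, hkS, hka, hkb⟩

section Rainbow

def IsRainbow (F : ι → Finset (Sym2 V)) (J : Finset ι) (d : ι → Sym2 V) : Prop :=
  (∀ i ∈ J, d i ∈ F i) ∧ ∀ i ∈ J, ∀ j ∈ J, i ≠ j → ¬ Meets (d i) (d j)

variable {F : ι → Finset (Sym2 V)} {J J' : Finset ι} {d d' : ι → Sym2 V}

theorem IsRainbow.mono (h : IsRainbow F J d) (hJ : J' ⊆ J) : IsRainbow F J' d :=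
  ⟨fun i hi => h.1 i (hJ hi), fun i hi j hj => h.2 i (hJ hi) j (hJ hj)⟩

theorem IsRainbow.congr (h : IsRainbow F J d) (hd : ∀ i ∈ J, d i = d' i) : IsRainbow F J d' :=
  ⟨fun i hi => hd i hi ▸ h.1 i hi,
    fun i hi j hj hij => hd i hi ▸ hd j hj ▸ h.2 i hi j hj hij⟩

theorem IsRainbow.insert [DecidableEq ι] (h : IsRainbow F J d) {k : ι} (hk : d k ∈ F k)
    (hkJ : ∀ j ∈ J, j ≠ k → ¬ Meets (d k) (d j)) : IsRainbow F (insert k J) d := by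
  refine ⟨fun i hi => ?_, fun i hi j hj hij => ?_⟩
  · rcases Finset.mem_insert.mp hi with rfl | hi
    exacts [hk, h.1 i hi]
  · rcases Finset.mem_insert.mp hi with rfl | hiJ <;> rcases Finset.mem_insert.mp hj with rfl | hjJ
    · exact absurd rfl hij
    · exact hkJ j hjJ (Ne.symm hij)
    · exact fun hm => hkJ i hiJ hij (meets_comm.mp hm)
    · exact h.2 i hiJ j hjJ hij

/-- Otherwise `p` and `q` could replace `c i₀` and enlarge the maximum rainbow matching. -/
theorem meets_of_meetsOnly_of_maximal [DecidableEq V] {I : Finset ι} {c : ι → Sym2 V}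
    (hR : IsRainbow F I c)
    (hmax : ∀ J d, IsRainbow F J d → J.card ≤ I.card) {i₀ : ι} (hi₀ : i₀ ∈ I)
    {k₁ k₂ : ι} (hk : k₁ ≠ k₂) (hk₁ : k₁ ∉ I) (hk₂ : k₂ ∉ I) {p q : Sym2 V}
    (hp : p ∈ F k₁) (hq : q ∈ F k₂) (hpM : MeetsOnly (I.image c) p (c i₀))
    (hqM : MeetsOnly (I.image c) q (c i₀)) : Meets p q := by
  classical
  by_contra hpq
  set d := Function.update (Function.update c k₁ p) k₂ q
  have hd₁ : d k₁ = p := by simp [d, hk]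
  have hd₂ : d k₂ = q := by simp [d]
  have hdc : ∀ i ∈ I, c i = d i := fun i hi => by
    simp [d, ne_of_mem_of_not_mem hi hk₁, ne_of_mem_of_not_mem hi hk₂]
  have hprivate : ∀ g, MeetsOnly (I.image c) g (c i₀) → ∀ j ∈ I.erase i₀, ¬ Meets g (d j) := by
    intro g hg j hj
    obtain ⟨hji₀, hjI⟩ := Finset.mem_erase.mp hj
    rw [← hdc j hjI]
    refine hg.2 _ (Finset.mem_image_of_mem c hjI) fun hcj => ?_
    exact hR.2 j hjI i₀ hi₀ hji₀ (hcj ▸ meets_self _)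
  have hbig : IsRainbow F (insert k₁ (insert k₂ (I.erase i₀))) d := by
    have hsmall : IsRainbow F (I.erase i₀) d :=
      (hR.mono (I.erase_subset i₀)).congr fun i hi => hdc i (Finset.mem_of_mem_erase hi)
    refine (hsmall.insert ?_ ?_).insert ?_ ?_
    · rwa [hd₂]
    · exact fun j hj _ => hd₂ ▸ hprivate q hqM j hj
    · rwa [hd₁]
    · intro j hj hjk
      rcases Finset.mem_insert.mp hj with rfl | hj
      · rwa [hd₁, hd₂]
      · exact hd₁ ▸ hprivate p hpM j hj
  have hk₂' : k₂ ∉ I.erase i₀ := fun h => hk₂ (Finset.mem_of_mem_erase h)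
  have hk₁' : k₁ ∉ insert k₂ (I.erase i₀) := by
    simp only [Finset.mem_insert, Finset.mem_erase, not_or]
    exact ⟨hk, fun h => hk₁ h.2⟩
  have := hmax _ _ hbig
  rw [Finset.card_insert_of_notMem hk₁', Finset.card_insert_of_notMem hk₂',
    Finset.card_erase_of_mem hi₀] at this
  have := Finset.card_pos.mpr ⟨i₀, hi₀⟩
  omega

end Rainbow

theorem exists_mem_forall_mem_of_pairwise_meets {e : Sym2 V} (he : ¬ e.IsDiag) {S : Set ι}
    (hS : 2 < S.ncard) {P : ι → Set (Sym2 V)} (hne : ∀ i ∈ S, (P i).Nonempty)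
    (hedge : ∀ i ∈ S, ∀ g ∈ P i, ¬ g.IsDiag ∧ g ≠ e ∧ Meets g e)
    (hdisj : ∀ i ∈ S, ∀ j ∈ S, i ≠ j → Disjoint (P i) (P j))
    (hcross : ∀ i ∈ S, ∀ j ∈ S, i ≠ j → ∀ g ∈ P i, ∀ h ∈ P j, Meets g h) :
    ∃ v ∈ e, ∀ i ∈ S, ∀ g ∈ P i, v ∈ g := by
  obtain ⟨x, y⟩ := e
  rw [Sym2.mk_isDiag_iff] at he
  have hshape : ∀ i ∈ S, ∀ g ∈ P i, ∃ c, c ≠ x ∧ c ≠ y ∧ (g = s(x, c) ∨ g = s(y, c)) :=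
    fun i hi g hg =>
      exists_eq_mk_of_meets (hedge i hi g hg).1 (hedge i hi g hg).2.1 (hedge i hi g hg).2.2
  have hindex : ∀ i ∈ S, ∀ j ∈ S, ∀ g ∈ P i, g ∈ P j → i = j := fun i hi j hj _ hgi hgj =>
    by_contra fun hij => Set.disjoint_left.mp (hdisj i hi j hj hij) hgi hgj
  by_contra! hnot
  obtain ⟨i₁, hi₁, g₁, hg₁, hxg₁⟩ := hnot x (Sym2.mem_mk_left x y)
  obtain ⟨i₂, hi₂, g₂, hg₂, hyg₂⟩ := hnot y (Sym2.mem_mk_right x y)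
  obtain ⟨a, hax, hay, rfl⟩ : ∃ a, a ≠ x ∧ a ≠ y ∧ g₁ = s(y, a) := by
    obtain ⟨a, hax, hay, rfl | rfl⟩ := hshape i₁ hi₁ g₁ hg₁
    · exact absurd (Sym2.mem_mk_left x a) hxg₁
    · exact ⟨a, hax, hay, rfl⟩
  obtain ⟨b, hbx, hby, rfl⟩ : ∃ b, b ≠ x ∧ b ≠ y ∧ g₂ = s(x, b) := by
    obtain ⟨b, hbx, hby, rfl | rfl⟩ := hshape i₂ hi₂ g₂ hg₂
    · exact ⟨b, hbx, hby, rfl⟩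
    · exact absurd (Sym2.mem_mk_left y b) hyg₂
  have hthird : ∀ k ∈ S, k ≠ i₁ → k ≠ i₂ → ∀ g ∈ P k, g = s(x, a) ∨ g = s(y, b) :=
    fun k hk hk₁ hk₂ g hg =>
      eq_or_eq_of_meets_of_meets he hax hby (hshape k hk g hg)
        (hcross k hk i₁ hi₁ hk₁ g hg _ hg₁) (hcross k hk i₂ hi₂ hk₂ g hg _ hg₂)
  by_cases hab : a = b
  · subst hab
    obtain ⟨k, hk, hk₁, hk₂⟩ := exists_mem_ne_ne_of_two_lt_ncard hS i₁ i₂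
    obtain ⟨g, hg⟩ := hne k hk
    rcases hthird k hk hk₁ hk₂ g hg with rfl | rfl
    · exact hk₂ (hindex k hk i₂ hi₂ _ hg hg₂)
    · exact hk₁ (hindex k hk i₁ hi₁ _ hg hg₁)
  have hapart : ¬ Meets s(x, a) s(y, b) := by
    rw [meets_mk_mk_iff]
    grind
  by_cases h₁₂ : i₁ = i₂
  · subst h₁₂
    obtain ⟨k, hk, hk₁, -⟩ := exists_mem_ne_ne_of_two_lt_ncard hS i₁ i₁
    obtain ⟨k', hk', hk'₁, hk'k⟩ := exists_mem_ne_ne_of_two_lt_ncard hS i₁ k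
    obtain ⟨g, hg⟩ := hne k hk
    obtain ⟨g', hg'⟩ := hne k' hk'
    have hm := hcross k hk k' hk' (Ne.symm hk'k) g hg g' hg'
    rcases hthird k hk hk₁ hk₁ g hg with rfl | rfl <;>
      rcases hthird k' hk' hk'₁ hk'₁ g' hg' with rfl | rfl
    · exact hk'k (hindex k' hk' k hk _ hg' hg)
    · exact hapart hm
    · exact hapart (meets_comm.mp hm)
    · exact hk'k (hindex k' hk' k hk _ hg' hg)
  · have hm := hcross i₁ hi₁ i₂ hi₂ h₁₂ _ hg₁ _ hg₂
    rw [meets_mk_mk_iff] at hm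
    grind

end

theorem stmt_15_general {V : Type*} [DecidableEq V] (G : SimpleGraph V) (n : ℕ)
    (F : Fin n → Finset (Sym2 V))
    (hedges : ∀ i, ∀ e ∈ F i, e ∈ G.edgeSet)
    (hdisjF : ∀ i j, i ≠ j → Disjoint (F i) (F j))
    (I : Finset (Fin n)) (c : Fin n → Sym2 V)
    (hc : ∀ i ∈ I, c i ∈ F i)
    (hdisj : ∀ i ∈ I, ∀ j ∈ I, i ≠ j → ∀ v, v ∈ c i → v ∉ c j)
    (hmax : ∀ (J : Finset (Fin n)) (d : Fin n → Sym2 V),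
      (∀ i ∈ J, d i ∈ F i) →
      (∀ i ∈ J, ∀ j ∈ J, i ≠ j → ∀ v, v ∈ d i → v ∉ d j) →
      J.card ≤ I.card)
    (e : Sym2 V) (he : e ∈ I.image c)
    (hdeg : 3 ≤ hwDeg F I (I.image c) e) :
    ∃ v, v ∈ e ∧ ∀ i : Fin n, i ∉ I → HalfWasteful (I.image c) (F i) e →
      ∀ g ∈ F i, MeetsOnly (I.image c) g e → v ∈ g := by
  obtain ⟨i₀, hi₀, rfl⟩ := Finset.mem_image.mp he
  have hR : IsRainbow F I c := ⟨hc, fun i hi j hj hij => not_meets_iff.mpr (hdisj i hi j hj hij)⟩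
  have hmax' : ∀ J d, IsRainbow F J d → J.card ≤ I.card := fun J d hd =>
    hmax J d hd.1 fun i hi j hj hij => not_meets_iff.mp (hd.2 i hi j hj hij)
  have hdiag : ∀ i, ∀ g ∈ F i, ¬ g.IsDiag := fun i g hg =>
    G.not_isDiag_of_mem_edgeSet (hedges i g hg)
  obtain ⟨v, hv, hall⟩ := exists_mem_forall_mem_of_pairwise_meets (hdiag i₀ _ (hc i₀ hi₀))
    (S := {i | i ∉ I ∧ HalfWasteful (I.image c) (F i) (c i₀)})
    (P := fun i => {g | g ∈ F i ∧ MeetsOnly (I.image c) g (c i₀)}) hdeg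
    (fun i ⟨_, _, _, _, ge, hge, _, _, _, _, hgeM, _⟩ => ⟨ge, hge, hgeM⟩)
    (fun i ⟨hiI, _⟩ g ⟨hg, hgM⟩ => ⟨hdiag i g hg,
      fun h => Finset.disjoint_left.mp (hdisjF i i₀ (ne_of_mem_of_not_mem hi₀ hiI).symm) hg
        (h ▸ hc i₀ hi₀), hgM.1⟩)
    (fun i _ j _ hij => Set.disjoint_of_subset (fun _ h => h.1) (fun _ h => h.1)
      (Finset.disjoint_coe.mpr (hdisjF i j hij)))
    (fun i ⟨hiI, _⟩ j ⟨hjI, _⟩ hij g ⟨hg, hgM⟩ h ⟨hh, hhM⟩ =>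
      meets_of_meetsOnly_of_maximal hR hmax' hi₀ hij hiI hjI hg hh hgM hhM)
  exact ⟨v, hv, fun i hiI hiW g hg hgM => hall i ⟨hiI, hiW⟩ g ⟨hg, hgM⟩⟩

/-- Let `F₁, …, Fₙ` be pairwise disjoint matchings of size `n` in a
graph, and `R = I.image c` a maximum-size rainbow matching. If `e ∈ R` is
half-`G`-wasteful for at least 3 distinct unrepresented matchings `G`, then all edges `g`
belonging to some unrepresented matching `G` for which `e` is half-`G`-wasteful and
intersecting `e` and no other edge of `R` pass through a single common vertex of `e`. -/
theorem stmt_15 {V : Type*} [DecidableEq V] (G : SimpleGraph V) (n : ℕ)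
    (F : Fin n → Finset (Sym2 V))
    (hedges : ∀ i, ∀ e ∈ F i, e ∈ G.edgeSet)
    (hmatch : ∀ i, ∀ e ∈ F i, ∀ f ∈ F i, e ≠ f → ∀ v, v ∈ e → v ∉ f)
    (hsize : ∀ i, (F i).card = n)
    (hdisjF : ∀ i j, i ≠ j → Disjoint (F i) (F j))
    (I : Finset (Fin n)) (c : Fin n → Sym2 V)
    (hc : ∀ i ∈ I, c i ∈ F i)
    (hdisj : ∀ i ∈ I, ∀ j ∈ I, i ≠ j → ∀ v, v ∈ c i → v ∉ c j)
    (hmax : ∀ (J : Finset (Fin n)) (d : Fin n → Sym2 V),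
      (∀ i ∈ J, d i ∈ F i) →
      (∀ i ∈ J, ∀ j ∈ J, i ≠ j → ∀ v, v ∈ d i → v ∉ d j) →
      J.card ≤ I.card)
    (e : Sym2 V) (he : e ∈ I.image c)
    (hdeg : 3 ≤ hwDeg F I (I.image c) e) :
    ∃ v, v ∈ e ∧ ∀ i : Fin n, i ∉ I → HalfWasteful (I.image c) (F i) e →
      ∀ g ∈ F i, MeetsOnly (I.image c) g e → v ∈ g :=
  stmt_15_general G n F hedges hdisjF I c hc hdisj hmax e he hdeg
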